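/- arXiv:2410.08746 — 4 statements merged into one kernel-verified Lean document; each statement's English description precedes it below -/
import Mathlib

section
/- Let $0<h<1$, $0\le k\le 2$, and let $t \ge \left(\frac{24}{1-h}\ln\frac{12}{1-h}\right)^{1/(1-h)}$. Then $\sum_{i=1}^t \left(i^{-k}\prod_{j=i+1}^t (1-j^{-h})\right) \le 9\ln(t)\, t^{-k+h}$. -/
lemma aux_log2 (x : ℝ) (hx : 0 < x) : 2 * Real.log x ≤ x := by
  have h1 : Real.log (Real.sqrt x) ≤ Real.sqrt x - 1 :=
    Real.log_le_sub_one_of_pos (Real.sqrt_pos.2 hx)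
  have h2 : Real.log (Real.sqrt x) = Real.log x / 2 := Real.log_sqrt hx.le
  nlinarith [Real.sq_sqrt hx.le, sq_nonneg (Real.sqrt x - 2)]

lemma aux_loglin (a z : ℝ) (ha0 : 0 < a) (ha : 2 < Real.log a)
    (hz : 2 * a * Real.log a ≤ z) : a * Real.log z ≤ z := by
  set L := Real.log a with hLdef
  have hy0 : (0:ℝ) < 2 * a * L := by nlinarith
  have hz0 : 0 < z := lt_of_lt_of_le hy0 hz
  have h1 : Real.log (z / (2*a*L)) ≤ z / (2*a*L) - 1 :=
    Real.log_le_sub_one_of_pos (by positivity)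
  have h2 : Real.log (z / (2*a*L)) = Real.log z - Real.log (2*a*L) :=
    Real.log_div (ne_of_gt hz0) (ne_of_gt hy0)
  have h3 : Real.log (2*a*L) ≤ 2 * L := by
    have h4 : 2 * a * L ≤ a * a := by nlinarith [aux_log2 a ha0]
    have h5 : Real.log (2*a*L) ≤ Real.log (a*a) := Real.log_le_log hy0 h4
    rw [Real.log_mul (ne_of_gt ha0) (ne_of_gt ha0)] at h5
    linarith
  have h6 : Real.log z ≤ 2*L + z/(2*a*L) - 1 := by linarith
  have h7 : a * Real.log z ≤ 2*a*L + z/(2*L) - a := by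
    have hm := mul_le_mul_of_nonneg_left h6 ha0.le
    have he : a * (z/(2*a*L)) = z/(2*L) := by
      field_simp
    nlinarith [hm, he]
  have h8 : z/(2*L) ≤ z - (2*a*L - a) := by
    rw [div_le_iff₀ (by linarith : (0:ℝ) < 2*L)]
    nlinarith [mul_nonneg (by linarith : (0:ℝ) ≤ z - 2*a*L) (by linarith : (0:ℝ) ≤ 2*L - 1)]
  linarith

set_option maxHeartbeats 1000000 in
theorem stmt_0 (h k : ℝ) (hh0 : 0 < h) (hh1 : h < 1) (hk0 : 0 ≤ k) (hk2 : k ≤ 2)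
    (t : ℕ) (ht : ((24 / (1 - h)) * Real.log (12 / (1 - h))) ^ (1 / (1 - h)) ≤ (t : ℝ)) :
    ∑ i ∈ Finset.Icc 1 t,
        ((i : ℝ) ^ (-k) * ∏ j ∈ Finset.Icc (i + 1) t, (1 - (j : ℝ) ^ (-h)))
      ≤ 9 * Real.log t * (t : ℝ) ^ (-k + h) := by
  have hε : 0 < 1 - h := by linarith
  set ε := 1 - h with hεdef
  set a : ℝ := 12 / ε with hadef
  have ha12 : 12 < a := by
    rw [hadef, lt_div_iff₀ hε]
    nlinarith
  have ha0 : (0:ℝ) < a := by linarith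
  have hL2 : 2 < Real.log a := by
    have h9 : Real.exp 1 < 2.7182818286 := Real.exp_one_lt_d9
    have he2 : Real.exp 2 < 12 := by
      have h2 : Real.exp 2 = Real.exp 1 * Real.exp 1 := by
        rw [← Real.exp_add]; norm_num
      nlinarith [Real.exp_pos 1]
    have := Real.log_lt_log (Real.exp_pos 2) (lt_trans he2 (by linarith : (12:ℝ) < a))
    rwa [Real.log_exp] at this
  set L := Real.log a with hLdef
  have hy0' : 24 / ε * L = 2 * a * L := by rw [hadef]; ring
  rw [hy0'] at ht
  have hy0pos : (0:ℝ) < 2 * a * L := by nlinarith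
  have hy048 : (48:ℝ) < 2*a*L := by nlinarith
  have htR : 2*a*L ≤ (t:ℝ) := by
    refine le_trans ?_ ht
    calc 2*a*L = (2*a*L) ^ (1:ℝ) := (Real.rpow_one _).symm
    _ ≤ (2*a*L) ^ (1/ε) := Real.rpow_le_rpow_of_exponent_le (by linarith)
        (by rw [le_div_iff₀ hε]; nlinarith)
  have ht48 : (48:ℝ) ≤ (t:ℝ) := by linarith
  have ht0 : (0:ℝ) < t := by linarith
  have ht1 : (1:ℝ) ≤ t := by linarith
  have htn : 48 ≤ t := by exact_mod_cast ht48
  have htε : 2*a*L ≤ (t:ℝ) ^ ε := by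
    have h1 : ((2*a*L) ^ (1/ε)) ^ ε ≤ (t:ℝ) ^ ε :=
      Real.rpow_le_rpow (Real.rpow_nonneg (by linarith) _) ht hε.le
    rwa [← Real.rpow_mul (by linarith : (0:ℝ) ≤ 2*a*L),
      one_div_mul_cancel (ne_of_gt hε), Real.rpow_one] at h1
  have hlog12 : 12 * Real.log t ≤ (t:ℝ) ^ ε := by
    have h1 : a * Real.log ((t:ℝ)^ε) ≤ (t:ℝ)^ε := aux_loglin a _ ha0 hL2 htε
    rw [Real.log_rpow ht0] at h1
    have h2 : a * (ε * Real.log t) = 12 * Real.log t := by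
      rw [hadef]; field_simp
    linarith [h1, h2]
  have hlogt1 : 1 ≤ Real.log t := by
    have h1 : Real.exp 1 ≤ (t:ℝ) := by nlinarith [Real.exp_one_lt_d9]
    have := Real.log_le_log (Real.exp_pos 1) h1
    rwa [Real.log_exp] at this
  set x := (t:ℝ) ^ (-h) with hxdef
  have hx0 : 0 < x := Real.rpow_pos_of_pos ht0 _
  have hx1 : x ≤ 1 := Real.rpow_le_one_of_one_le_of_nonpos ht1 (by linarith)
  set q := Real.exp (-x) with hqdef
  have hq0 : 0 < q := Real.exp_pos _
  have hq1 : q < 1 := by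
    rw [hqdef]
    exact Real.exp_lt_one_iff.2 (by linarith)
  have htx : (t:ℝ) * x = (t:ℝ)^ε := by
    rw [hxdef, hεdef, sub_eq_add_neg, Real.rpow_add ht0, Real.rpow_one]
  -- Step C: bound each term
  have hterm : ∀ i ∈ Finset.Icc 1 t,
      (i:ℝ)^(-k) * ∏ j ∈ Finset.Icc (i+1) t, (1 - (j:ℝ)^(-h))
        ≤ (i:ℝ)^(-k) * q ^ (t - i) := by
    intro i hi
    simp only [Finset.mem_Icc] at hi
    have hi1 : (1:ℝ) ≤ (i:ℝ) := by exact_mod_cast hi.1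
    have hik : (0:ℝ) ≤ (i:ℝ)^(-k) := Real.rpow_nonneg (by linarith) _
    apply mul_le_mul_of_nonneg_left _ hik
    calc ∏ j ∈ Finset.Icc (i+1) t, (1 - (j:ℝ)^(-h))
        ≤ ∏ _j ∈ Finset.Icc (i+1) t, q := by
          apply Finset.prod_le_prod
          · intro j hj
            simp only [Finset.mem_Icc] at hj
            have hj1 : (1:ℝ) ≤ (j:ℝ) := by
              have : 1 ≤ j := by omega
              exact_mod_cast this
            have := Real.rpow_le_one_of_one_le_of_nonpos hj1 (by linarith : -h ≤ 0)
            linarith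
          · intro j hj
            simp only [Finset.mem_Icc] at hj
            have hjt : (j:ℝ) ≤ (t:ℝ) := by exact_mod_cast hj.2
            have hj0 : (0:ℝ) < (j:ℝ) := by
              have : 1 ≤ j := by omega
              exact_mod_cast Nat.lt_of_lt_of_le Nat.zero_lt_one this
            have hxj : x ≤ (j:ℝ)^(-h) :=
              Real.rpow_le_rpow_of_nonpos hj0 hjt (by linarith : -h ≤ 0)
            have hexp : 1 - x ≤ q := by
              rw [hqdef]; nlinarith [Real.add_one_le_exp (-x)]
            linarith
      _ = q ^ (t - i) := by
          rw [Finset.prod_const, Nat.card_Icc]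
          congr 1
          omega
  have key : ∑ i ∈ Finset.Icc 1 t,
      ((i:ℝ)^(-k) * ∏ j ∈ Finset.Icc (i+1) t, (1 - (j:ℝ)^(-h)))
      ≤ ∑ i ∈ Finset.Icc 1 t, (i:ℝ)^(-k) * q^(t-i) :=
    Finset.sum_le_sum hterm
  set m := t / 2 with hmdef
  have hmt : m ≤ t := by omega
  have hmR : (m:ℝ) ≤ (t:ℝ)/2 := by
    rw [le_div_iff₀ (by norm_num : (0:ℝ) < 2)]
    exact_mod_cast Nat.div_mul_le_self t 2
  have hIcc : Finset.Icc 1 t = Finset.Ioc 0 t := by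
    rw [← Finset.Icc_add_one_left_eq_Ioc, zero_add]
  have hsplit := Finset.sum_Ioc_consecutive (fun i => (i:ℝ)^(-k) * q^(t-i))
    (Nat.zero_le m) hmt
  -- Part 1
  have hpart1 : ∑ i ∈ Finset.Ioc 0 m, (i:ℝ)^(-k) * q^(t-i) ≤ (t:ℝ) ^ (-k + h) := by
    have hb : ∀ i ∈ Finset.Ioc 0 m, (i:ℝ)^(-k) * q^(t-i) ≤ q^(t-m) := by
      intro i hi
      simp only [Finset.mem_Ioc] at hi
      have hi1 : (1:ℝ) ≤ (i:ℝ) := by exact_mod_cast hi.1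
      have h1 : (i:ℝ)^(-k) ≤ 1 :=
        Real.rpow_le_one_of_one_le_of_nonpos hi1 (by linarith)
      have h2 : q^(t-i) ≤ q^(t-m) :=
        pow_le_pow_of_le_one hq0.le hq1.le (by omega)
      calc (i:ℝ)^(-k) * q^(t-i) ≤ 1 * q^(t-m) :=
            mul_le_mul h1 h2 (by positivity) zero_le_one
        _ = q^(t-m) := one_mul _
    calc ∑ i ∈ Finset.Ioc 0 m, (i:ℝ)^(-k) * q^(t-i)
        ≤ ∑ _i ∈ Finset.Ioc 0 m, q^(t-m) := Finset.sum_le_sum hb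
      _ = (m:ℝ) * q^(t-m) := by
          rw [Finset.sum_const, Nat.card_Ioc, nsmul_eq_mul]
          norm_num
      _ ≤ (t:ℝ) * q^(t-m) := by
          apply mul_le_mul_of_nonneg_right _ (by positivity)
          exact_mod_cast hmt
      _ ≤ (t:ℝ) * (t:ℝ)^(-(6:ℝ)) := by
          apply mul_le_mul_of_nonneg_left _ ht0.le
          have hc : ((t - m:ℕ):ℝ) = (t:ℝ) - (m:ℝ) := by
            push_cast [hmt]; ring
          calc q^(t-m) = Real.exp (((t-m:ℕ):ℝ) * (-x)) := by
                rw [hqdef, ← Real.exp_nat_mul]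
            _ ≤ Real.exp (-(6 * Real.log t)) := by
                apply Real.exp_le_exp.2
                have h1 : (t:ℝ)/2 ≤ ((t-m:ℕ):ℝ) := by rw [hc]; linarith
                have h2 : 6 * Real.log t ≤ (t:ℝ)/2 * x := by
                  have he : (t:ℝ)/2 * x = (t:ℝ)^ε / 2 := by
                    rw [← htx]; ring
                  rw [he]; linarith
                nlinarith [mul_le_mul_of_nonneg_right h1 hx0.le]
            _ = (t:ℝ)^(-(6:ℝ)) := by
                rw [Real.rpow_def_of_pos ht0]
                congr 1
                ring
      _ = (t:ℝ)^(1 + -(6:ℝ)) := by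
          rw [Real.rpow_add ht0, Real.rpow_one]
      _ ≤ (t:ℝ)^(-k + h) := Real.rpow_le_rpow_of_exponent_le ht1 (by linarith)
  -- geometric sum bound
  have hgeo : ∑ i ∈ Finset.Ioc m t, q^(t-i) ≤ 2 * (t:ℝ)^h := by
    have hre : ∑ i ∈ Finset.Ioc m t, q^(t-i) = ∑ s ∈ Finset.range (t-m), q^s := by
      apply Finset.sum_nbij' (fun i => t - i) (fun s => t - s)
      · intro i hi
        simp only [Finset.mem_Ioc] at hi
        simp only [Finset.mem_range]
        omega
      · intro s hs
        simp only [Finset.mem_range] at hs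
        simp only [Finset.mem_Ioc]
        omega
      · intro i hi
        simp only [Finset.mem_Ioc] at hi
        omega
      · intro s hs
        simp only [Finset.mem_range] at hs
        omega
      · intro i _
        rfl
    rw [hre]
    have hq1' : (0:ℝ) < 1 - q := by linarith
    have hn : (0:ℝ) ≤ q^(t-m) := pow_nonneg hq0.le _
    have step : ∑ s ∈ Finset.range (t-m), q^s ≤ 1/(1-q) := by
      rw [geom_sum_eq (ne_of_lt hq1)]
      have heq : (q^(t-m) - 1)/(q - 1) = (1 - q^(t-m))/(1 - q) := by
        rw [← neg_sub 1 (q^(t-m)), ← neg_sub 1 q, neg_div_neg_eq]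
      rw [heq]
      gcongr
      linarith
    have hth : 1 ≤ (t:ℝ)^h := by
      have := Real.rpow_le_rpow_of_exponent_le ht1 hh0.le
      rwa [Real.rpow_zero] at this
    have hxth : x * (t:ℝ)^h = 1 := by
      rw [hxdef, ← Real.rpow_add ht0, neg_add_cancel, Real.rpow_zero]
    have hq_le : q ≤ (x+1)⁻¹ := by
      rw [hqdef, Real.exp_neg]
      exact inv_anti₀ (by linarith) (by linarith [Real.add_one_le_exp x])
    have h1q : x/(1+x) ≤ 1 - q := by
      have he : x/(1+x) = 1 - (1+x)⁻¹ := by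
        field_simp
        ring
      rw [he]
      have : (x+1)⁻¹ = (1+x)⁻¹ := by ring_nf
      linarith [hq_le, this]
    have hfin : 1/(1-q) ≤ 2*(t:ℝ)^h := by
      rw [div_le_iff₀ hq1']
      have hc1 : 2*(t:ℝ)^h*(x/(1+x)) = 2/(1+x) := by
        field_simp
        nlinarith [hxth]
      have hc2 : (1:ℝ) ≤ 2/(1+x) := by
        rw [le_div_iff₀ (by linarith : (0:ℝ) < 1+x)]
        linarith
      have hc3 : 2*(t:ℝ)^h*(x/(1+x)) ≤ 2*(t:ℝ)^h*(1-q) := by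
        apply mul_le_mul_of_nonneg_left h1q (by positivity)
      linarith
    linarith
  -- Part 2
  have hpart2 : ∑ i ∈ Finset.Ioc m t, (i:ℝ)^(-k) * q^(t-i) ≤ 8 * (t:ℝ)^(-k+h) := by
    have hik : ∀ i ∈ Finset.Ioc m t, (i:ℝ)^(-k) ≤ 4 * (t:ℝ)^(-k) := by
      intro i hi
      simp only [Finset.mem_Ioc] at hi
      have h2i : t ≤ 2*i := by omega
      have hi2 : (t:ℝ)/2 ≤ (i:ℝ) := by
        rw [div_le_iff₀ (by norm_num : (0:ℝ) < 2)]
        exact_mod_cast (by omega : t ≤ i * 2)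
      have h1 : (i:ℝ)^(-k) ≤ ((t:ℝ)/2)^(-k) :=
        Real.rpow_le_rpow_of_nonpos (by linarith) hi2 (by linarith)
      have h2 : ((t:ℝ)/2)^(-k) = (t:ℝ)^(-k) / ((2:ℝ)^(-k)) :=
        Real.div_rpow ht0.le (by norm_num) _
      have h3 : ((2:ℝ)^(-k))⁻¹ = (2:ℝ)^k := by
        rw [Real.rpow_neg (by norm_num : (0:ℝ) ≤ 2), inv_inv]
      have h4 : (2:ℝ)^k ≤ 4 := by
        have hb := Real.rpow_le_rpow_of_exponent_le (by norm_num : (1:ℝ) ≤ 2) hk2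
        have hc : (2:ℝ)^((2:ℕ):ℝ) = (2:ℝ)^(2:ℕ) := Real.rpow_natCast 2 2
        rw [show ((2:ℕ):ℝ) = (2:ℝ) by norm_num] at hc
        rw [hc] at hb
        norm_num at hb
        exact hb
      have htk : (0:ℝ) < (t:ℝ)^(-k) := Real.rpow_pos_of_pos ht0 _
      have h2k : (0:ℝ) < (2:ℝ)^(-k) := Real.rpow_pos_of_pos (by norm_num) _
      calc (i:ℝ)^(-k) ≤ ((t:ℝ)/2)^(-k) := h1
        _ = (t:ℝ)^(-k) * (2:ℝ)^k := by rw [h2, div_eq_mul_inv, h3]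
        _ ≤ (t:ℝ)^(-k) * 4 := mul_le_mul_of_nonneg_left h4 htk.le
        _ = 4 * (t:ℝ)^(-k) := by ring
    calc ∑ i ∈ Finset.Ioc m t, (i:ℝ)^(-k)*q^(t-i)
        ≤ ∑ i ∈ Finset.Ioc m t, 4*(t:ℝ)^(-k)*q^(t-i) := by
          apply Finset.sum_le_sum
          intro i hi
          exact mul_le_mul_of_nonneg_right (hik i hi) (pow_nonneg hq0.le _)
      _ = 4*(t:ℝ)^(-k) * ∑ i ∈ Finset.Ioc m t, q^(t-i) := by
          rw [Finset.mul_sum]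
      _ ≤ 4*(t:ℝ)^(-k) * (2*(t:ℝ)^h) := by
          apply mul_le_mul_of_nonneg_left hgeo (by positivity)
      _ = 8 * (t:ℝ)^(-k+h) := by
          rw [Real.rpow_add ht0]; ring
  have hsum' : ∑ i ∈ Finset.Icc 1 t, (i:ℝ)^(-k) * q^(t-i) ≤ 9 * (t:ℝ)^(-k+h) := by
    rw [hIcc, ← hsplit]
    linarith [hpart1, hpart2]
  have hfinal : (0:ℝ) ≤ (t:ℝ)^(-k+h) := Real.rpow_nonneg ht0.le _
  calc ∑ i ∈ Finset.Icc 1 t,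
        ((i : ℝ) ^ (-k) * ∏ j ∈ Finset.Icc (i + 1) t, (1 - (j : ℝ) ^ (-h)))
      ≤ ∑ i ∈ Finset.Icc 1 t, (i:ℝ)^(-k) * q^(t-i) := key
    _ ≤ 9 * (t:ℝ)^(-k+h) := hsum'
    _ ≤ 9 * Real.log t * (t:ℝ)^(-k+h) := by nlinarith [hfinal, hlogt1]
end

section
/- Let $0<h<1$, $0\le k\le 2$, and let $t \ge \left(\frac{24}{1-h}\ln\frac{12}{1-h}\right)^{1/(1-h)}$. Then $\max_{1\le i\le t}\left(i^{-k}\prod_{j=i+1}^t (1-j^{-h})\right) \le 4 t^{-k}$. -/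
lemma key_log {B x : ℝ} (hB : 12 ≤ B) (hx : 2 * B * Real.log B ≤ x) :
    B / 3 * Real.log x ≤ x := by
  have hB0 : 0 < B := by linarith
  have hlB1 : 1 ≤ Real.log B := by
    have he : Real.exp 1 ≤ 12 := by
      have := Real.exp_one_lt_d9; nlinarith
    calc 1 = Real.log (Real.exp 1) := (Real.log_exp 1).symm
      _ ≤ Real.log 12 := Real.log_le_log (Real.exp_pos 1) he
      _ ≤ Real.log B := Real.log_le_log (by norm_num) hB
  have hx0pos : 0 < 2 * B * Real.log B := by nlinarith
  have hxpos : 0 < x := lt_of_lt_of_le hx0pos hx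
  have h1 : Real.log x ≤ Real.log (2 * B * Real.log B) + x / (2 * B * Real.log B) - 1 := by
    have h := Real.log_le_sub_one_of_pos (div_pos hxpos hx0pos)
    rw [Real.log_div (ne_of_gt hxpos) (ne_of_gt hx0pos)] at h
    linarith
  have h2 : Real.log (2 * B * Real.log B) ≤ 3 * Real.log B := by
    rw [Real.log_mul (by positivity) (by positivity), Real.log_mul (by norm_num) (ne_of_gt hB0)]
    have l2 : Real.log 2 ≤ Real.log B := Real.log_le_log (by norm_num) (by linarith)
    have lB : Real.log B ≤ B := Real.log_le_self hB0.le
    have llB : Real.log (Real.log B) ≤ Real.log B := by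
      calc Real.log (Real.log B) ≤ Real.log B - 1 :=
            Real.log_le_sub_one_of_pos (by linarith)
        _ ≤ Real.log B := by linarith
    linarith
  have heq : B / 3 * (x / (2 * B * Real.log B)) = x / (6 * Real.log B) := by
    field_simp; ring
  have hfrac : x / (6 * Real.log B) ≤ x / 6 :=
    div_le_div_of_nonneg_left hxpos.le (by norm_num) (by linarith)
  have hhalf : B * Real.log B ≤ x / 2 := by linarith
  nlinarith [mul_le_mul_of_nonneg_left (h1) (by positivity : (0:ℝ) ≤ B / 3)]

theorem stmt_1 (h k : ℝ) (hh0 : 0 < h) (hh1 : h < 1) (hk0 : 0 ≤ k) (hk2 : k ≤ 2)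
    (t : ℕ) (ht : ((24 / (1 - h)) * Real.log (12 / (1 - h))) ^ (1 / (1 - h)) ≤ (t : ℝ)) :
    ∀ i ∈ Finset.Icc 1 t,
      (i : ℝ) ^ (-k) * ∏ j ∈ Finset.Icc (i + 1) t, (1 - (j : ℝ) ^ (-h))
        ≤ 4 * (t : ℝ) ^ (-k) := by
  intro i hi
  rw [Finset.mem_Icc] at hi
  obtain ⟨hi1, hit⟩ := hi
  set ε : ℝ := 1 - h with hεdef
  have hε0 : 0 < ε := by simp [hεdef]; linarith
  have hB : (12:ℝ) ≤ 12 / ε := by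
    rw [le_div_iff₀ hε0]; nlinarith
  have hlB1 : (0:ℝ) < Real.log (12 / ε) := Real.log_pos (by linarith)
  have hx0pos : 0 < (24 / ε) * Real.log (12 / ε) := by positivity
  have hlog1 : (1:ℝ) ≤ Real.log (12 / ε) := by
    have he : Real.exp 1 ≤ 12 := by
      have := Real.exp_one_lt_d9; nlinarith
    calc (1:ℝ) = Real.log (Real.exp 1) := (Real.log_exp 1).symm
      _ ≤ Real.log 12 := Real.log_le_log (Real.exp_pos 1) he
      _ ≤ Real.log (12 / ε) := Real.log_le_log (by norm_num) hB
  have h2412 : (24:ℝ) / ε = 2 * (12 / ε) := by ring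
  -- t ≥ 1
  have ht1 : (1:ℝ) ≤ (t:ℝ) := by
    refine le_trans ?_ ht
    exact Real.one_le_rpow (by nlinarith) (by positivity)
  have ht0 : (0:ℝ) < (t:ℝ) := by linarith
  have hi0 : (1:ℝ) ≤ (i:ℝ) := by exact_mod_cast hi1
  -- t^ε ≥ x0
  have htε : (24 / ε) * Real.log (12 / ε) ≤ (t:ℝ) ^ ε := by
    have := Real.rpow_le_rpow (by positivity) ht hε0.le
    rwa [← Real.rpow_mul hx0pos.le, one_div_mul_cancel hε0.ne', Real.rpow_one] at this
  -- key: 4 * log t ≤ t^ε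
  have hkey : 4 * Real.log (t:ℝ) ≤ (t:ℝ) ^ ε := by
    have hx' : 2 * (12 / ε) * Real.log (12 / ε) ≤ (t:ℝ) ^ ε := by
      have e : 2 * (12 / ε) * Real.log (12 / ε) = 24 / ε * Real.log (12 / ε) := by ring
      rw [e]; exact htε
    have hk' := key_log hB hx'
    rw [Real.log_rpow ht0 ε] at hk'
    have : (12 / ε) / 3 * (ε * Real.log (t:ℝ)) = 4 * Real.log (t:ℝ) := by
      field_simp; ring
    linarith [hk', this ▸ hk']
  -- product facts
  set P : ℝ := ∏ j ∈ Finset.Icc (i + 1) t, (1 - (j : ℝ) ^ (-h)) with hPdef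
  have hfac0 : ∀ j ∈ Finset.Icc (i+1) t, (0:ℝ) ≤ 1 - (j : ℝ) ^ (-h) := by
    intro j hj
    rw [Finset.mem_Icc] at hj
    have : (1:ℝ) ≤ (j:ℝ) := by
      have : 1 ≤ j := le_trans (Nat.le_add_left 1 i) hj.1
      exact_mod_cast this
    have := Real.rpow_le_one_of_one_le_of_nonpos this (by linarith : -h ≤ 0)
    linarith
  have hP0 : (0:ℝ) ≤ P := Finset.prod_nonneg hfac0
  have hP1 : P ≤ 1 := by
    refine Finset.prod_le_one hfac0 ?_
    intro j hj
    have : (0:ℝ) ≤ (j:ℝ) ^ (-h) := Real.rpow_nonneg (by positivity) _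
    linarith
  have hik0 : (0:ℝ) ≤ (i:ℝ) ^ (-k) := Real.rpow_nonneg (by positivity) _
  have htk0 : (0:ℝ) ≤ (t:ℝ) ^ (-k) := Real.rpow_nonneg ht0.le _
  by_cases hcase : t ≤ 2 * i
  · -- i large case
    have hik : (i:ℝ) ^ (-k) ≤ 4 * (t:ℝ) ^ (-k) := by
      have hhalf : (t:ℝ) / 2 ≤ (i:ℝ) := by
        have : (t:ℝ) ≤ 2 * (i:ℝ) := by exact_mod_cast hcase
        linarith
      have h1 : (i:ℝ) ^ (-k) ≤ ((t:ℝ)/2) ^ (-k) :=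
        Real.rpow_le_rpow_of_nonpos (by linarith) hhalf (by linarith)
      have h2 : ((t:ℝ)/2) ^ (-k) = (t:ℝ) ^ (-k) * 2 ^ k := by
        rw [Real.div_rpow ht0.le (by norm_num), Real.rpow_neg (by norm_num : (0:ℝ) ≤ 2)]
        field_simp
      have h3 : (2:ℝ) ^ k ≤ 4 := by
        have := Real.rpow_le_rpow_of_exponent_le (by norm_num : (1:ℝ) ≤ 2) hk2
        have h4 : (2:ℝ) ^ (2:ℝ) = 4 := by
          rw [show ((2:ℝ):ℝ) = ((2:ℕ):ℝ) by norm_num, Real.rpow_natCast]; norm_num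
        linarith [h4 ▸ this]
      calc (i:ℝ) ^ (-k) ≤ (t:ℝ) ^ (-k) * 2 ^ k := by rw [← h2]; exact h1
        _ ≤ (t:ℝ) ^ (-k) * 4 := mul_le_mul_of_nonneg_left h3 htk0
        _ = 4 * (t:ℝ) ^ (-k) := by ring
    calc (i:ℝ) ^ (-k) * P ≤ (i:ℝ) ^ (-k) * 1 :=
          mul_le_mul_of_nonneg_left hP1 hik0
      _ ≤ 4 * (t:ℝ) ^ (-k) := by linarith
  · -- i small case
    push_neg at hcase
    set S : ℝ := ∑ j ∈ Finset.Icc (i + 1) t, (j : ℝ) ^ (-h) with hSdef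
    have hPS : P ≤ Real.exp (-S) := by
      calc P ≤ ∏ j ∈ Finset.Icc (i + 1) t, Real.exp (-(j : ℝ) ^ (-h)) := by
            refine Finset.prod_le_prod hfac0 ?_
            intro j hj
            have := Real.add_one_le_exp (-(j : ℝ) ^ (-h))
            linarith
        _ = Real.exp (-S) := by
            rw [← Real.exp_sum, hSdef, ← Finset.sum_neg_distrib]
    have hcard : (Finset.Icc (i + 1) t).card = t - i := by
      rw [Nat.card_Icc]; omega
    have hSlow : ((t - i : ℕ):ℝ) * (t:ℝ) ^ (-h) ≤ S := by
      have := Finset.card_nsmul_le_sum (Finset.Icc (i + 1) t)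
        (fun j => (j : ℝ) ^ (-h)) ((t:ℝ) ^ (-h)) ?_
      · rwa [hcard, nsmul_eq_mul] at this
      · intro j hj
        rw [Finset.mem_Icc] at hj
        have hj0 : (0:ℝ) < (j:ℝ) := by
          have : 1 ≤ j := le_trans (Nat.le_add_left 1 i) hj.1
          exact_mod_cast Nat.lt_of_lt_of_le Nat.zero_lt_one this
        have hjt : (j:ℝ) ≤ (t:ℝ) := by exact_mod_cast hj.2
        exact Real.rpow_le_rpow_of_nonpos hj0 hjt (by linarith)
    have hcast : ((t - i : ℕ):ℝ) = (t:ℝ) - (i:ℝ) := by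
      rw [Nat.cast_sub hit]
    have hhalf : (t:ℝ) / 2 ≤ (t:ℝ) - (i:ℝ) := by
      have : (2 * i + 1 : ℕ) ≤ t := by omega
      have : (2:ℝ) * (i:ℝ) + 1 ≤ (t:ℝ) := by exact_mod_cast this
      linarith
    have hth0 : (0:ℝ) ≤ (t:ℝ) ^ (-h) := Real.rpow_nonneg ht0.le _
    have hSε : (t:ℝ) ^ ε / 2 ≤ S := by
      have h1 : (t:ℝ) / 2 * (t:ℝ) ^ (-h) ≤ S := by
        calc (t:ℝ) / 2 * (t:ℝ) ^ (-h) ≤ ((t:ℝ) - (i:ℝ)) * (t:ℝ) ^ (-h) :=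
              mul_le_mul_of_nonneg_right hhalf hth0
          _ = ((t - i : ℕ):ℝ) * (t:ℝ) ^ (-h) := by rw [hcast]
          _ ≤ S := hSlow
      have h2 : (t:ℝ) ^ ε = (t:ℝ) * (t:ℝ) ^ (-h) := by
        rw [show ε = 1 + -h by rw [hεdef]; ring, Real.rpow_add ht0, Real.rpow_one]
      rw [h2]; linarith
    -- exp(-t^ε/2) ≤ t^(-2)
    have hexp : Real.exp (-((t:ℝ) ^ ε / 2)) ≤ (t:ℝ) ^ (-(2:ℝ)) := by
      have h2 : (t:ℝ) ^ (-(2:ℝ)) = Real.exp (Real.log (t:ℝ) * (-(2:ℝ))) :=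
        Real.rpow_def_of_pos ht0 _
      rw [h2]
      apply Real.exp_le_exp.mpr
      linarith
    have ht2k : (t:ℝ) ^ (-(2:ℝ)) ≤ (t:ℝ) ^ (-k) :=
      Real.rpow_le_rpow_of_exponent_le ht1 (by linarith)
    have hik1 : (i:ℝ) ^ (-k) ≤ 1 :=
      Real.rpow_le_one_of_one_le_of_nonpos hi0 (by linarith)
    calc (i:ℝ) ^ (-k) * P ≤ 1 * P := mul_le_mul_of_nonneg_right hik1 hP0
      _ = P := one_mul P
      _ ≤ Real.exp (-S) := hPS
      _ ≤ Real.exp (-((t:ℝ) ^ ε / 2)) := by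
          apply Real.exp_le_exp.mpr; linarith
      _ ≤ (t:ℝ) ^ (-(2:ℝ)) := hexp
      _ ≤ (t:ℝ) ^ (-k) := ht2k
      _ ≤ 4 * (t:ℝ) ^ (-k) := by linarith
end

section
/- Let $H \ge 1$, $\beta_t = \frac{H+1}{H+t}$, and $\beta_t^i = \beta_i \prod_{j=i+1}^t (1-\beta_j)$ for $1 \le i \le t$. Then $\max_{1 \le i \le t} \beta_t^i \le \frac{2H}{t}$. -/
theorem stmt_3 (H t : ℕ) (hH : 1 ≤ H) (ht : 1 ≤ t)
    (β : ℕ → ℝ) (hβ : ∀ s : ℕ, 1 ≤ s → β s = ((H : ℝ) + 1) / ((H : ℝ) + s)) :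
    ∀ i ∈ Finset.Icc 1 t,
      β i * ∏ j ∈ Finset.Icc (i + 1) t, (1 - β j) ≤ 2 * (H : ℝ) / t := by
  intro i hi
  rw [Finset.mem_Icc] at hi
  obtain ⟨hi1, hit⟩ := hi
  have hH1 : (1 : ℝ) ≤ H := by exact_mod_cast hH
  have key : ∀ s : ℕ, i ≤ s → β i * ∏ j ∈ Finset.Icc (i + 1) s, (1 - β j)
      ≤ ((H : ℝ) + 1) / ((H : ℝ) + s) := by
    intro s hs
    induction s, hs using Nat.le_induction with
    | base =>
      rw [Finset.Icc_eq_empty (by omega), Finset.prod_empty, mul_one, hβ i hi1]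
    | succ n hn ih =>
      have hden : (0 : ℝ) < (H : ℝ) + n := by positivity
      have hden1 : (0 : ℝ) < (H : ℝ) + (n + 1 : ℕ) := by push_cast; positivity
      have hb : β (n + 1) = ((H : ℝ) + 1) / ((H : ℝ) + (n + 1 : ℕ)) :=
        hβ (n + 1) (by omega)
      have hnn : (0 : ℝ) ≤ 1 - β (n + 1) := by
        rw [hb]; rw [sub_nonneg, div_le_one hden1]; push_cast; linarith
      rw [Finset.prod_Icc_succ_top (by omega), ← mul_assoc]
      calc β i * (∏ j ∈ Finset.Icc (i + 1) n, (1 - β j)) * (1 - β (n + 1))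
          ≤ ((H : ℝ) + 1) / ((H : ℝ) + n) * (1 - β (n + 1)) := by
            exact mul_le_mul_of_nonneg_right ih hnn
        _ ≤ ((H : ℝ) + 1) / ((H : ℝ) + (n + 1 : ℕ)) := by
            have hsub : 1 - β (n + 1) = (n : ℝ) / ((H : ℝ) + (n + 1 : ℕ)) := by
              rw [hb]; field_simp; push_cast; ring
            rw [hsub, div_mul_div_comm,
              div_le_div_iff₀ (by positivity) hden1]
            push_cast
            nlinarith [hH1, hden, mul_nonneg (mul_nonneg (show (0:ℝ) ≤ (H:ℝ)+1 by linarith) (show (0:ℝ) ≤ (H:ℝ)+(n:ℝ)+1 by linarith)) (show (0:ℝ) ≤ (H:ℝ) by linarith)]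
  have h1 := key t hit
  have ht1 : (1 : ℝ) ≤ t := by exact_mod_cast ht
  calc β i * ∏ j ∈ Finset.Icc (i + 1) t, (1 - β j)
      ≤ ((H : ℝ) + 1) / ((H : ℝ) + t) := h1
    _ ≤ 2 * (H : ℝ) / t := by
        rw [div_le_div_iff₀ (by positivity) (by positivity)]
        nlinarith
end

section
/- Let $H \ge 1$, $\beta_t = \frac{H+1}{H+t}$, and $\beta_t^i = \beta_i \prod_{j=i+1}^t (1-\beta_j)$ for $1 \le i \le t$. Then $\sum_{i=1}^t (\beta_t^i)^2 \le \frac{2H}{t}$. -/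
open Finset

private lemma beta_nonneg (H : ℕ) (β : ℕ → ℝ)
    (hβ : ∀ s : ℕ, 1 ≤ s → β s = ((H : ℝ) + 1) / ((H : ℝ) + s))
    (s : ℕ) (hs : 1 ≤ s) : 0 ≤ β s ∧ β s ≤ 1 := by
  rw [hβ s hs]
  have h1 : (0:ℝ) < (H:ℝ) + s := by positivity
  have h2 : (1:ℝ) ≤ (s:ℝ) := by exact_mod_cast hs
  constructor
  · positivity
  · rw [div_le_one h1]; linarith

private lemma prod_nonneg' (H : ℕ) (β : ℕ → ℝ)
    (hβ : ∀ s : ℕ, 1 ≤ s → β s = ((H : ℝ) + 1) / ((H : ℝ) + s))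
    (a b : ℕ) (ha : 1 ≤ a) : 0 ≤ ∏ j ∈ Icc a b, (1 - β j) := by
  apply Finset.prod_nonneg
  intro j hj
  have hj1 : 1 ≤ j := le_trans ha (mem_Icc.mp hj).1
  have := (beta_nonneg H β hβ j hj1).2
  linarith

private lemma sum_le_one (H : ℕ) (β : ℕ → ℝ)
    (hβ : ∀ s : ℕ, 1 ≤ s → β s = ((H : ℝ) + 1) / ((H : ℝ) + s))
    (t : ℕ) (ht : 1 ≤ t) :
    ∑ i ∈ Icc 1 t, β i * ∏ j ∈ Icc (i+1) t, (1 - β j) ≤ 1 := by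
  induction t, ht using Nat.le_induction with
  | base =>
    have h1 : (0:ℝ) < (H:ℝ) + 1 := by positivity
    simp [hβ 1 le_rfl, div_self (ne_of_gt h1)]
  | succ n hn ih =>
    rw [Finset.sum_Icc_succ_top (by omega : 1 ≤ n + 1)]
    have hsplit : ∀ i ∈ Icc 1 n,
        β i * ∏ j ∈ Icc (i+1) (n+1), (1 - β j)
          = (β i * ∏ j ∈ Icc (i+1) n, (1 - β j)) * (1 - β (n+1)) := by
      intro i hi
      obtain ⟨hi1, hin⟩ := Finset.mem_Icc.mp hi
      rw [Finset.prod_Icc_succ_top (by omega : i + 1 ≤ n + 1)]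
      ring
    rw [Finset.sum_congr rfl hsplit, ← Finset.sum_mul]
    rw [show Icc (n+1+1) (n+1) = (∅ : Finset ℕ) by
      apply Finset.Icc_eq_empty; omega]
    simp only [Finset.prod_empty, mul_one]
    have hb := beta_nonneg H β hβ (n+1) (by omega)
    have hsnn : 0 ≤ ∑ i ∈ Icc 1 n, β i * ∏ j ∈ Icc (i+1) n, (1 - β j) := by
      apply Finset.sum_nonneg
      intro i hi
      have hi1 : 1 ≤ i := (mem_Icc.mp hi).1
      exact mul_nonneg (beta_nonneg H β hβ i hi1).1 (prod_nonneg' H β hβ _ n (by omega))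
    nlinarith [ih]

private lemma key_ineq (H : ℕ) (hH : 1 ≤ H) (β : ℕ → ℝ)
    (hβ : ∀ s : ℕ, 1 ≤ s → β s = ((H : ℝ) + 1) / ((H : ℝ) + s))
    (i : ℕ) (hi : 1 ≤ i) : β i * (1 - β (i+1)) ≤ β (i+1) := by
  rw [hβ i hi, hβ (i+1) (by omega)]
  push_cast
  have h1 : (0:ℝ) < (H:ℝ) + i := by positivity
  have h2 : (0:ℝ) < (H:ℝ) + (i + 1) := by positivity
  have hHpos : (0:ℝ) < (H:ℝ) := by exact_mod_cast hH
  have hipos : (1:ℝ) ≤ (i:ℝ) := by exact_mod_cast hi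
  rw [div_mul_eq_mul_div, div_le_div_iff₀ h1 h2]
  have he : (1 - ((H:ℝ) + 1) / ((H:ℝ) + (i + 1))) * ((H:ℝ) + (i + 1)) = (i:ℝ) := by
    field_simp
    ring
  rw [mul_assoc, he]
  nlinarith

private lemma term_le (H : ℕ) (hH : 1 ≤ H) (β : ℕ → ℝ)
    (hβ : ∀ s : ℕ, 1 ≤ s → β s = ((H : ℝ) + 1) / ((H : ℝ) + s))
    (t : ℕ) :
    ∀ d i, 1 ≤ i → i + d = t →
      β i * ∏ j ∈ Icc (i+1) t, (1 - β j) ≤ β t := by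
  intro d
  induction d with
  | zero =>
    intro i hi hit
    simp only [Nat.add_zero] at hit
    subst hit
    rw [show Icc (i+1) i = (∅ : Finset ℕ) by apply Finset.Icc_eq_empty; omega]
    simp
  | succ d ih =>
    intro i hi hit
    have hi1t : i + 1 ≤ t := by omega
    have hsplit : ∏ j ∈ Icc (i+1) t, (1 - β j)
        = (1 - β (i+1)) * ∏ j ∈ Icc (i+2) t, (1 - β j) := by
      rw [← Finset.Ico_add_one_right_eq_Icc, ← Finset.Ico_add_one_right_eq_Icc,
        Finset.prod_eq_prod_Ico_succ_bot (by omega : i + 1 < t + 1)]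
    rw [hsplit]
    have hP : 0 ≤ ∏ j ∈ Icc (i+2) t, (1 - β j) := prod_nonneg' H β hβ _ _ (by omega)
    have hk := key_ineq H hH β hβ i hi
    calc β i * ((1 - β (i+1)) * ∏ j ∈ Icc (i+2) t, (1 - β j))
        = (β i * (1 - β (i+1))) * ∏ j ∈ Icc (i+2) t, (1 - β j) := by ring
      _ ≤ β (i+1) * ∏ j ∈ Icc (i+2) t, (1 - β j) := by
          exact mul_le_mul_of_nonneg_right hk hP
      _ ≤ β t := ih (i+1) (by omega) (by omega)

theorem stmt_4 (H t : ℕ) (hH : 1 ≤ H) (ht : 1 ≤ t)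
    (β : ℕ → ℝ) (hβ : ∀ s : ℕ, 1 ≤ s → β s = ((H : ℝ) + 1) / ((H : ℝ) + s)) :
    ∑ i ∈ Finset.Icc 1 t,
      (β i * ∏ j ∈ Finset.Icc (i + 1) t, (1 - β j)) ^ 2 ≤ 2 * (H : ℝ) / t := by
  have htpos : (0:ℝ) < (t:ℝ) := by exact_mod_cast ht
  have hHpos : (1:ℝ) ≤ (H:ℝ) := by exact_mod_cast hH
  have hβt : β t ≤ 2 * (H:ℝ) / t := by
    rw [hβ t ht]
    rw [div_le_div_iff₀ (by positivity) htpos]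
    nlinarith
  have hM : 0 ≤ 2 * (H:ℝ) / t := by positivity
  calc ∑ i ∈ Finset.Icc 1 t, (β i * ∏ j ∈ Finset.Icc (i + 1) t, (1 - β j)) ^ 2
      ≤ ∑ i ∈ Finset.Icc 1 t, (2 * (H:ℝ) / t) * (β i * ∏ j ∈ Finset.Icc (i + 1) t, (1 - β j)) := by
        apply Finset.sum_le_sum
        intro i hi
        obtain ⟨hi1, hit⟩ := Finset.mem_Icc.mp hi
        have hg0 : 0 ≤ β i * ∏ j ∈ Finset.Icc (i + 1) t, (1 - β j) :=
          mul_nonneg (beta_nonneg H β hβ i hi1).1 (prod_nonneg' H β hβ _ _ (by omega))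
        have hgM : β i * ∏ j ∈ Finset.Icc (i + 1) t, (1 - β j) ≤ 2 * (H:ℝ) / t :=
          le_trans (term_le H hH β hβ t (t - i) i hi1 (by omega)) hβt
        rw [sq]
        exact mul_le_mul_of_nonneg_right hgM hg0
    _ = (2 * (H:ℝ) / t) * ∑ i ∈ Finset.Icc 1 t, β i * ∏ j ∈ Finset.Icc (i + 1) t, (1 - β j) := by
        rw [Finset.mul_sum]
    _ ≤ (2 * (H:ℝ) / t) * 1 := by
        exact mul_le_mul_of_nonneg_left (sum_le_one H β hβ t ht) hM
    _ = 2 * (H:ℝ) / t := mul_one _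
end
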